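/- arXiv:nlin/0608065 — 5 statements merged into one kernel-verified Lean document; each statement's English description precedes it below -/
import Mathlib

section
/- (Proposition 3.1: co-solutions of relative equilibria) Suppose u₀ is a relative equilibrium: Φ_t(u₀) = e^{ξt}u₀ for all t ≥ 0, with drift ξ ∈ LΓ. Suppose there are γ_n ∈ Γ, η ∈ LΓ and v₀ ∈ B such that ‖γ_n u₀ − v₀‖_w → 0 and, for each t > 0, ‖(e^{ξ_n t} − e^{ηt})γ_n u₀‖_w → 0 as n → ∞, where ξ_n is the drift of γ_n u₀ (i.e. e^{ξ_n t} = γ_n e^{ξt} γ_n^{-1}). If the flow Φ_t and the maps e^{ηt} are continuous in ‖·‖_w, then v₀ is a relative equilibrium with drift η: Φ_t(v₀) = e^{ηt}v₀ for all t ≥ 0. -/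
/-!
Transport the relative-equilibrium identity along the approximating orbit: by equivariance
`γ_n u₀` is a relative equilibrium with the conjugated drift `γ_n e^{ξt} γ_n⁻¹`, so
`Φ_t(γ_n u₀) - e^{ηt}γ_n u₀ → 0`. Weak continuity of `Φ_t` and of `e^{ηt}` at `v₀ = lim γ_n u₀`
then gives `‖Φ_t v₀ - e^{ηt}v₀‖_w = 0`, and the weak norm separates points.
-/

open Filter Topology

section Seminorm

variable {𝕜 E ι : Type*} [SeminormedRing 𝕜] [AddGroup E] [SMul 𝕜 E] (p : Seminorm 𝕜 E)
  {l : Filter ι} {x : ι → E} {v : E}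

theorem Seminorm.tendsto_sub_apply_of_tendsto {f : E → E}
    (hf : ∀ ε > (0 : ℝ), ∃ δ > (0 : ℝ), ∀ w : E, p (w - v) < δ → p (f w - f v) < ε)
    (hx : Tendsto (fun k => p (x k - v)) l (𝓝 0)) :
    Tendsto (fun k => p (f (x k) - f v)) l (𝓝 0) := by
  rw [Metric.tendsto_nhds] at hx ⊢
  intro ε hε
  obtain ⟨δ, hδ, hfδ⟩ := hf ε hε
  filter_upwards [hx δ hδ] with k hk
  rw [Real.dist_0_eq_abs, abs_of_nonneg (apply_nonneg _ _)] at hk ⊢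
  exact hfδ _ hk

theorem Seminorm.sub_apply_eq_zero_of_tendsto [l.NeBot] {f g : E → E}
    (hx : Tendsto (fun k => p (x k - v)) l (𝓝 0))
    (hf : ∀ ε > (0 : ℝ), ∃ δ > (0 : ℝ), ∀ w : E, p (w - v) < δ → p (f w - f v) < ε)
    (hg : ∀ ε > (0 : ℝ), ∃ δ > (0 : ℝ), ∀ w : E, p (w - v) < δ → p (g w - g v) < ε)
    (hfg : Tendsto (fun k => p (f (x k) - g (x k))) l (𝓝 0)) :
    p (f v - g v) = 0 := by
  have hbound : ∀ k, p (f v - g v) ≤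
      p (f (x k) - f v) + p (f (x k) - g (x k)) + p (g (x k) - g v) := fun k =>
    calc p (f v - g v)
        = p ((f v - f (x k)) + (f (x k) - g (x k)) + (g (x k) - g v)) := by
          rw [sub_add_sub_cancel, sub_add_sub_cancel]
      _ ≤ p (f v - f (x k)) + p (f (x k) - g (x k)) + p (g (x k) - g v) :=
          (map_add_le_add p _ _).trans (add_le_add_left (map_add_le_add p _ _) _)
      _ = _ := by rw [map_sub_rev p]
  have hlim : Tendsto (fun k => p (f (x k) - f v) + p (f (x k) - g (x k)) +
      p (g (x k) - g v)) l (𝓝 0) := by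
    simpa using ((p.tendsto_sub_apply_of_tendsto hf hx).add hfg).add
      (p.tendsto_sub_apply_of_tendsto hg hx)
  exact le_antisymm (ge_of_tendsto' hlim hbound) (apply_nonneg _ _)

end Seminorm

theorem apply_smul_eq_conj_smul_of_equivariant {Γ B : Type*} [Group Γ] [MulAction Γ B]
    {F : B → B} {e : Γ} {u : B} (hF : ∀ (γ : Γ) (w : B), F (γ • w) = γ • F w)
    (hu : F u = e • u) (γ : Γ) :
    F (γ • u) = (γ * e * γ⁻¹) • (γ • u) := by
  rw [hF, hu, smul_smul, smul_smul, inv_mul_cancel_right]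

theorem cosolution_relative_equilibrium_general
    {B : Type*} [AddCommGroup B] [Module ℝ B]
    {Γ : Type*} [Group Γ] [DistribMulAction Γ B]
    (nw : Seminorm ℝ B)
    (hsep : ∀ u : B, nw u = 0 → u = 0)
    (Φ : ℝ → B → B)
    (hΦ0 : Φ 0 = id)
    (hequiv : ∀ t : ℝ, 0 ≤ t → ∀ (γ : Γ) (u : B), Φ t (γ • u) = γ • Φ t u)
    (hwcont : ∀ t : ℝ, 0 ≤ t → ∀ u : B, ∀ ε > (0 : ℝ), ∃ δ > (0 : ℝ),
      ∀ v : B, nw (v - u) < δ → nw (Φ t v - Φ t u) < ε)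
    -- the one-parameter subgroups `t ↦ e^{ξt}` and `t ↦ e^{ηt}` of `Γ`
    (eξ eη : ℝ → Γ)
    (hη0 : eη 0 = 1)
    -- weak continuity of the maps `u ↦ e^{ηt}u`
    (hηcont : ∀ t : ℝ, 0 ≤ t → ∀ ε > (0 : ℝ), ∃ δ > (0 : ℝ),
      ∀ u v : B, nw (u - v) < δ → nw (eη t • u - eη t • v) < ε)
    (u₀ v₀ : B)
    -- `u₀` is a relative equilibrium with drift `ξ`
    (hrel : ∀ t : ℝ, 0 ≤ t → Φ t u₀ = eξ t • u₀)
    (γseq : ℕ → Γ)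
    (hclos : Tendsto (fun k => nw (γseq k • u₀ - v₀)) atTop (𝓝 0))
    -- `‖(e^{ξ_n t} - e^{ηt}) γ_n u₀‖_w → 0` where `e^{ξ_n t} = γ_n e^{ξt} γ_n⁻¹`
    (hdrift : ∀ t : ℝ, 0 < t →
      Tendsto (fun k =>
        nw ((γseq k * eξ t * (γseq k)⁻¹) • (γseq k • u₀) - eη t • (γseq k • u₀)))
        atTop (𝓝 0)) :
    ∀ t : ℝ, 0 ≤ t → Φ t v₀ = eη t • v₀ := by
  intro t ht
  rcases ht.eq_or_lt with rfl | ht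
  · simp [hΦ0, hη0]
  have hΦγ : ∀ k, Φ t (γseq k • u₀) = (γseq k * eξ t * (γseq k)⁻¹) • (γseq k • u₀) :=
    fun k => apply_smul_eq_conj_smul_of_equivariant (hequiv t ht.le) (hrel t ht.le) (γseq k)
  have hηcont_v₀ : ∀ ε > (0 : ℝ), ∃ δ > (0 : ℝ),
      ∀ w : B, nw (w - v₀) < δ → nw (eη t • w - eη t • v₀) < ε := fun ε hε =>
    let ⟨δ, hδ, h⟩ := hηcont t ht.le ε hε
    ⟨δ, hδ, fun w => h w v₀⟩
  refine sub_eq_zero.mp (hsep _ (nw.sub_apply_eq_zero_of_tendsto hclos (hwcont t ht.le v₀)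
    hηcont_v₀ ?_))
  simpa only [hΦγ] using hdrift t ht

/-- Proposition 3.1: co-solutions of relative equilibria.  Suppose `Φ_t(u₀) = e^{ξt}u₀`,
`‖γ_n u₀ - v₀‖_w → 0` and `‖(e^{ξ_n t} - e^{ηt})γ_n u₀‖_w → 0` for each `t > 0`, where
`e^{ξ_n t} = γ_n e^{ξt} γ_n⁻¹` is the drift of `γ_n u₀`.  Then `v₀` is a relative
equilibrium with drift `η`: `Φ_t(v₀) = e^{ηt}v₀`. -/
theorem cosolution_relative_equilibrium
    {B : Type*} [AddCommGroup B] [Module ℝ B]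
    {Γ : Type*} [Group Γ] [DistribMulAction Γ B]
    (nw : Seminorm ℝ B)
    (hsep : ∀ u : B, nw u = 0 → u = 0)
    (hbdd : ∀ γ : Γ, ∃ K : ℝ, ∀ u : B, nw (γ • u) ≤ K * nw u)
    (Φ : ℝ → B → B)
    (hΦ0 : Φ 0 = id)
    (hΦadd : ∀ s t : ℝ, 0 ≤ s → 0 ≤ t → ∀ u : B, Φ t (Φ s u) = Φ (s + t) u)
    (hequiv : ∀ t : ℝ, 0 ≤ t → ∀ (γ : Γ) (u : B), Φ t (γ • u) = γ • Φ t u)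
    (hwcont : ∀ t : ℝ, 0 ≤ t → ∀ u : B, ∀ ε > (0 : ℝ), ∃ δ > (0 : ℝ),
      ∀ v : B, nw (v - u) < δ → nw (Φ t v - Φ t u) < ε)
    -- the one-parameter subgroups `t ↦ e^{ξt}` and `t ↦ e^{ηt}` of `Γ`
    (eξ eη : ℝ → Γ)
    (hξ0 : eξ 0 = 1) (hξadd : ∀ s t : ℝ, eξ (s + t) = eξ s * eξ t)
    (hη0 : eη 0 = 1) (hηadd : ∀ s t : ℝ, eη (s + t) = eη s * eη t)
    -- weak continuity of the maps `u ↦ e^{ηt}u`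
    (hηcont : ∀ t : ℝ, 0 ≤ t → ∀ ε > (0 : ℝ), ∃ δ > (0 : ℝ),
      ∀ u v : B, nw (u - v) < δ → nw (eη t • u - eη t • v) < ε)
    (u₀ v₀ : B)
    -- `u₀` is a relative equilibrium with drift `ξ`
    (hrel : ∀ t : ℝ, 0 ≤ t → Φ t u₀ = eξ t • u₀)
    (γseq : ℕ → Γ)
    (hclos : Tendsto (fun k => nw (γseq k • u₀ - v₀)) atTop (𝓝 0))
    -- `‖(e^{ξ_n t} - e^{ηt}) γ_n u₀‖_w → 0` where `e^{ξ_n t} = γ_n e^{ξt} γ_n⁻¹`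
    (hdrift : ∀ t : ℝ, 0 < t →
      Tendsto (fun k =>
        nw ((γseq k * eξ t * (γseq k)⁻¹) • (γseq k • u₀) - eη t • (γseq k • u₀)))
        atTop (𝓝 0)) :
    ∀ t : ℝ, 0 ≤ t → Φ t v₀ = eη t • v₀ :=
  cosolution_relative_equilibrium_general nw hsep Φ hΦ0 hequiv hwcont eξ eη hη0 hηcont u₀ v₀ hrel
    γseq hclos hdrift
end

section
/- If v₀ ∈ clos_w(Γu₀) and the drift ξ of the relative equilibrium u₀ lies in the centre of Γ (so that e^{ξt} commutes with all γ ∈ Γ), and each e^{ξt} is weakly continuous, then v₀ is a relative equilibrium with the same drift ξ. -/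
open Filter Topology

/-!
Because `e^{ξt}` is central, equivariance gives
`Φ_t(γ u₀) = γ e^{ξt} u₀ = e^{ξt} (γ u₀)` on the whole group orbit of `u₀`.
Both sides are weakly continuous in the initial point, so passing to the limit along
`γ_k u₀ → v₀` gives `Φ_t v₀ = e^{ξt} v₀`; the weak norm separates points.
-/

namespace Seminorm

variable {B : Type*} [AddCommGroup B] [Module ℝ B] (p : Seminorm ℝ B)

theorem tendsto_apply_sub_of_epsilon_delta {f : B → B} {x : B}
    (hf : ∀ ε > (0 : ℝ), ∃ δ > (0 : ℝ), ∀ y : B, p (y - x) < δ → p (f y - f x) < ε)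
    {u : ℕ → B} (hu : Tendsto (fun k => p (u k - x)) atTop (𝓝 0)) :
    Tendsto (fun k => p (f (u k) - f x)) atTop (𝓝 0) := by
  refine tendsto_order.2 ⟨fun a ha => .of_forall fun k => ha.trans_le (apply_nonneg _ _),
    fun ε hε => ?_⟩
  obtain ⟨δ, hδ, hfδ⟩ := hf ε hε
  exact (hu.eventually (gt_mem_nhds hδ)).mono fun k hk => hfδ _ hk

theorem apply_sub_eq_zero_of_tendsto {w : ℕ → B} {a b : B}
    (ha : Tendsto (fun k => p (w k - a)) atTop (𝓝 0))
    (hb : Tendsto (fun k => p (w k - b)) atTop (𝓝 0)) :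
    p (a - b) = 0 := by
  refine le_antisymm ?_ (apply_nonneg _ _)
  have hsum : Tendsto (fun k => p (w k - a) + p (w k - b)) atTop (𝓝 0) := by
    simpa using ha.add hb
  refine ge_of_tendsto' hsum fun k => ?_
  calc p (a - b) = p ((w k - b) - (w k - a)) := by congr 1; abel
    _ ≤ p (w k - b) + p (w k - a) := map_sub_le_add _ _ _
    _ = p (w k - a) + p (w k - b) := add_comm _ _

end Seminorm

theorem cosolution_central_drift_general
    {B : Type*} [AddCommGroup B] [Module ℝ B]
    {Γ : Type*} [Group Γ] [DistribMulAction Γ B]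
    (nw : Seminorm ℝ B)
    (hsep : ∀ u : B, nw u = 0 → u = 0)
    (Φ : ℝ → B → B)
    (hequiv : ∀ t : ℝ, 0 ≤ t → ∀ (γ : Γ) (u : B), Φ t (γ • u) = γ • Φ t u)
    (hwcont : ∀ t : ℝ, 0 ≤ t → ∀ u : B, ∀ ε > (0 : ℝ), ∃ δ > (0 : ℝ),
      ∀ v : B, nw (v - u) < δ → nw (Φ t v - Φ t u) < ε)
    (eξ : ℝ → Γ)
    -- `ξ` lies in the centre of `Γ`
    (hcent : ∀ (γ : Γ) (t : ℝ), γ * eξ t = eξ t * γ)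
    -- weak continuity of the maps `u ↦ e^{ξt}u`
    (hξcont : ∀ t : ℝ, 0 ≤ t → ∀ ε > (0 : ℝ), ∃ δ > (0 : ℝ),
      ∀ u v : B, nw (u - v) < δ → nw (eξ t • u - eξ t • v) < ε)
    (u₀ v₀ : B)
    (hrel : ∀ t : ℝ, 0 ≤ t → Φ t u₀ = eξ t • u₀)
    (γseq : ℕ → Γ)
    (hclos : Tendsto (fun k => nw (γseq k • u₀ - v₀)) atTop (𝓝 0)) :
    ∀ t : ℝ, 0 ≤ t → Φ t v₀ = eξ t • v₀ := by
  intro t ht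
  have horbit : ∀ γ : Γ, Φ t (γ • u₀) = eξ t • γ • u₀ := fun γ => by
    rw [hequiv t ht, hrel t ht, ← mul_smul, hcent, mul_smul]
  have hΦlim := nw.tendsto_apply_sub_of_epsilon_delta (hwcont t ht v₀) hclos
  have hξlim := nw.tendsto_apply_sub_of_epsilon_delta (f := (eξ t • ·))
    (fun ε hε => (hξcont t ht ε hε).imp fun _ ⟨hδ, h⟩ => ⟨hδ, fun v => h v v₀⟩) hclos
  simp only [horbit] at hΦlim
  exact sub_eq_zero.1 (hsep _ (nw.apply_sub_eq_zero_of_tendsto hΦlim hξlim))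

/-- If `v₀ ∈ clos_w(Γu₀)` and the drift `ξ` of the relative equilibrium `u₀` lies in the
centre of `Γ`, with each `e^{ξt}` weakly continuous, then `v₀` is a relative
equilibrium with the same drift `ξ`. -/
theorem cosolution_central_drift
    {B : Type*} [AddCommGroup B] [Module ℝ B]
    {Γ : Type*} [Group Γ] [DistribMulAction Γ B]
    (nw : Seminorm ℝ B)
    (hsep : ∀ u : B, nw u = 0 → u = 0)
    (hbdd : ∀ γ : Γ, ∃ K : ℝ, ∀ u : B, nw (γ • u) ≤ K * nw u)
    (Φ : ℝ → B → B)
    (hΦ0 : Φ 0 = id)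
    (hΦadd : ∀ s t : ℝ, 0 ≤ s → 0 ≤ t → ∀ u : B, Φ t (Φ s u) = Φ (s + t) u)
    (hequiv : ∀ t : ℝ, 0 ≤ t → ∀ (γ : Γ) (u : B), Φ t (γ • u) = γ • Φ t u)
    (hwcont : ∀ t : ℝ, 0 ≤ t → ∀ u : B, ∀ ε > (0 : ℝ), ∃ δ > (0 : ℝ),
      ∀ v : B, nw (v - u) < δ → nw (Φ t v - Φ t u) < ε)
    (eξ : ℝ → Γ)
    (hξ0 : eξ 0 = 1) (hξadd : ∀ s t : ℝ, eξ (s + t) = eξ s * eξ t)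
    -- `ξ` lies in the centre of `Γ`
    (hcent : ∀ (γ : Γ) (t : ℝ), γ * eξ t = eξ t * γ)
    -- weak continuity of the maps `u ↦ e^{ξt}u`
    (hξcont : ∀ t : ℝ, 0 ≤ t → ∀ ε > (0 : ℝ), ∃ δ > (0 : ℝ),
      ∀ u v : B, nw (u - v) < δ → nw (eξ t • u - eξ t • v) < ε)
    (u₀ v₀ : B)
    (hrel : ∀ t : ℝ, 0 ≤ t → Φ t u₀ = eξ t • u₀)
    (γseq : ℕ → Γ)
    (hclos : Tendsto (fun k => nw (γseq k • u₀ - v₀)) atTop (𝓝 0)) :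
    ∀ t : ℝ, 0 ≤ t → Φ t v₀ = eξ t • v₀ :=
  cosolution_central_drift_general nw hsep Φ hequiv hwcont eξ hcent hξcont u₀ v₀ hrel γseq hclos
end

section
/- (Theorem 4.2: inheritance of stability) Assume hypotheses (H1)–(H3). Suppose u₀, v₀ ∈ B with v₀ ∈ clos_w(Γu₀), Φ_t is a Γ-equivariant semiflow continuous in both the strong and weak norms, and u₀ is ss-stable. Then v₀ is sw-stable. -/
/-!
Strong stability of `u₀` holds with a modulus `δ(ε)` that is the same at every point `γ • u₀`
of its orbit, because `Γ` preserves the strong norm and commutes with `Φ t`. Given `u` strongly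
`δ`-close to `v₀`, pick `γ` with `γ • u₀` weakly close to `v₀` and compare `Φ t u` with
`Φ t v₀` through `Φ t (u + (γ • u₀ - v₀))` and `Φ t (γ • u₀)`: the middle step is strongly small
by the uniform modulus, the outer two are weakly small by weak continuity of `Φ t`.
-/

open Filter Topology

/-- `u₀` is sw-stable. -/
def SwStable {B : Type*} [AddCommGroup B] [Module ℝ B]
    (ns nw : Seminorm ℝ B) (Φ : ℝ → B → B) (u₀ : B) : Prop :=
  ∀ ε > (0 : ℝ), ∃ δ > (0 : ℝ), ∀ u : B, ns (u - u₀) < δ →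
    ∀ t > (0 : ℝ), nw (Φ t u - Φ t u₀) < ε

/-- `u₀` is ss-stable. -/
def SsStable {B : Type*} [AddCommGroup B] [Module ℝ B]
    (ns : Seminorm ℝ B) (Φ : ℝ → B → B) (u₀ : B) : Prop :=
  ∀ ε > (0 : ℝ), ∃ δ > (0 : ℝ), ∀ u : B, ns (u - u₀) < δ →
    ∀ t > (0 : ℝ), ns (Φ t u - Φ t u₀) < ε

/-- `v` lies in the weak closure of the orbit `Γu`. -/
def InWeakOrbitClosure {B : Type*} [AddCommGroup B] [Module ℝ B]
    {Γ : Type*} [Group Γ] [DistribMulAction Γ B]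
    (nw : Seminorm ℝ B) (u v : B) : Prop :=
  ∃ γseq : ℕ → Γ, Tendsto (fun k => nw (γseq k • u - v)) atTop (𝓝 0)

section

variable {B : Type*} [AddCommGroup B] [Module ℝ B]

theorem Seminorm.sub_lt_of_three_lt {p : Seminorm ℝ B} {a b c d : B} {ε : ℝ}
    (hab : p (a - b) < ε / 3) (hbc : p (b - c) < ε / 3) (hcd : p (c - d) < ε / 3) :
    p (a - d) < ε :=
  calc p (a - d) ≤ p (a - b) + p (b - c) + p (c - d) :=
        (le_map_sub_add_map_sub p a c d).trans
          (add_le_add_left (le_map_sub_add_map_sub p a b c) _)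
    _ < ε / 3 + ε / 3 + ε / 3 := by gcongr
    _ = ε := by ring

variable {Γ : Type*} [Group Γ] [DistribMulAction Γ B]

theorem InWeakOrbitClosure.exists_smul_sub_lt {nw : Seminorm ℝ B} {u v : B}
    (h : InWeakOrbitClosure (Γ := Γ) nw u v) {η : ℝ} (hη : 0 < η) :
    ∃ γ : Γ, nw (γ • u - v) < η :=
  let ⟨γseq, hγseq⟩ := h
  let ⟨k, hk⟩ := (hγseq.eventually (gt_mem_nhds hη)).exists
  ⟨γseq k, hk⟩

theorem SsStable.uniformly_on_orbit {ns : Seminorm ℝ B} {Φ : ℝ → B → B} {u₀ : B}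
    (hinv : ∀ (γ : Γ) (u : B), ns (γ • u) = ns u)
    (hequiv : ∀ (t : ℝ) (γ : Γ) (u : B), Φ t (γ • u) = γ • Φ t u)
    (hss : SsStable ns Φ u₀) :
    ∀ ε > (0 : ℝ), ∃ δ > (0 : ℝ), ∀ (γ : Γ) (u : B), ns (u - γ • u₀) < δ →
      ∀ t > (0 : ℝ), ns (Φ t u - Φ t (γ • u₀)) < ε := by
  intro ε hε
  obtain ⟨δ, hδ, hstable⟩ := hss ε hε
  refine ⟨δ, hδ, fun γ u hu t ht => ?_⟩
  have hu' : ns (γ⁻¹ • u - u₀) < δ := by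
    rwa [← hinv γ, smul_sub, smul_inv_smul]
  have hflow : Φ t u - Φ t (γ • u₀) = γ • (Φ t (γ⁻¹ • u) - Φ t u₀) := by
    rw [smul_sub, ← hequiv, ← hequiv, smul_inv_smul]
  rw [hflow, hinv]
  exact hstable _ hu' t ht

end

theorem inheritance_of_stability_general
    {B : Type*} [AddCommGroup B] [Module ℝ B]
    {Γ : Type*} [Group Γ] [DistribMulAction Γ B]
    (ns nw : Seminorm ℝ B)
    -- (H1)(a): the strong norm is Γ-invariant
    (h1a : ∀ (γ : Γ) (u : B), ns (γ • u) = ns u)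
    -- the family Λ of multiplication operators
    (Λ : Set (B →ₗ[ℝ] B))
    -- (H2)(a): ‖u‖_w ≤ ‖λu‖_s ≤ ‖u‖_s
    (h2a : ∀ L ∈ Λ, ∀ u : B, nw u ≤ ns (L u) ∧ ns (L u) ≤ ns u)
    -- (H2)(b): ‖u‖_s ≤ M implies ‖(1-λ)u‖_w < ε for a suitable λ ∈ Λ
    (h2b : ∀ M > (0 : ℝ), ∀ ε > (0 : ℝ), ∃ L ∈ Λ, ∀ u : B, ns u ≤ M → nw (u - L u) < ε)
    (Φ : ℝ → B → B)
    (hequiv : ∀ (t : ℝ) (γ : Γ) (u : B), Φ t (γ • u) = γ • Φ t u)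
    -- weak continuity of the semiflow
    (hwcont : ∀ t : ℝ, 0 ≤ t → ∀ u : B, ∀ ε > (0 : ℝ), ∃ δ > (0 : ℝ),
      ∀ v : B, nw (v - u) < δ → nw (Φ t v - Φ t u) < ε)
    (u₀ v₀ : B)
    (hclos : InWeakOrbitClosure (Γ := Γ) nw u₀ v₀)
    (hss : SsStable ns Φ u₀) :
    SwStable ns nw Φ v₀ := by
  -- any `L ∈ Λ` sandwiches `nw u ≤ ns (L u) ≤ ns u`
  obtain ⟨L, hL, -⟩ := h2b 1 one_pos 1 one_pos
  have hweak_le : ∀ u, nw u ≤ ns u := fun u => (h2a L hL u).1.trans (h2a L hL u).2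
  intro ε hε
  obtain ⟨δ, hδ, horbit⟩ := hss.uniformly_on_orbit h1a hequiv (ε / 3) (by positivity)
  refine ⟨δ, hδ, fun u hu t ht => ?_⟩
  obtain ⟨δv, hδv, hcont_v⟩ := hwcont t ht.le v₀ (ε / 3) (by positivity)
  obtain ⟨δu, hδu, hcont_u⟩ := hwcont t ht.le u (ε / 3) (by positivity)
  obtain ⟨γ, hγ⟩ := hclos.exists_smul_sub_lt (lt_min hδv hδu)
  set u' := u + (γ • u₀ - v₀)
  have hu'_strong : ns (u' - γ • u₀) < δ := by
    rwa [show u' - γ • u₀ = u - v₀ by simp only [u']; abel]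
  have hu'_weak : nw (u' - u) < δu := by
    rw [show u' - u = γ • u₀ - v₀ by simp only [u']; abel]
    exact hγ.trans_le (min_le_right _ _)
  refine Seminorm.sub_lt_of_three_lt (b := Φ t u') (c := Φ t (γ • u₀)) ?_ ?_ ?_
  · rw [← map_neg_eq_map, neg_sub]
    exact hcont_u u' hu'_weak
  · exact (hweak_le _).trans_lt (horbit γ u' hu'_strong t ht)
  · exact hcont_v _ (hγ.trans_le (min_le_left _ _))

/-- Theorem 4.2 (inheritance of stability): under (H1)–(H3), if `v₀ ∈ clos_w(Γu₀)` and
`u₀` is ss-stable, then `v₀` is sw-stable. -/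
theorem inheritance_of_stability
    {B : Type*} [AddCommGroup B] [Module ℝ B]
    {Γ : Type*} [Group Γ] [DistribMulAction Γ B]
    (ns nw : Seminorm ℝ B)
    -- (H1)(a): the strong norm is Γ-invariant
    (h1a : ∀ (γ : Γ) (u : B), ns (γ • u) = ns u)
    -- (H1)(b): each γ is weakly bounded
    (h1b : ∀ γ : Γ, ∃ K > (0 : ℝ), ∀ u : B, nw (γ • u) ≤ K * nw u)
    -- the family Λ of multiplication operators
    (Λ : Set (B →ₗ[ℝ] B))
    -- (H2)(a): ‖u‖_w ≤ ‖λu‖_s ≤ ‖u‖_s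
    (h2a : ∀ L ∈ Λ, ∀ u : B, nw u ≤ ns (L u) ∧ ns (L u) ≤ ns u)
    -- (H2)(b): ‖u‖_s ≤ M implies ‖(1-λ)u‖_w < ε for a suitable λ ∈ Λ
    (h2b : ∀ M > (0 : ℝ), ∀ ε > (0 : ℝ), ∃ L ∈ Λ, ∀ u : B, ns u ≤ M → nw (u - L u) < ε)
    -- (H3): approximation of weak-closure points in λ-weighted strong norm
    (h3 : ∀ u v : B, InWeakOrbitClosure (Γ := Γ) nw u v →
      ∀ L ∈ Λ, ∀ ε > (0 : ℝ), ∃ γ : Γ, ns (L (γ • u - v)) < ε)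
    (Φ : ℝ → B → B)
    (hequiv : ∀ (t : ℝ) (γ : Γ) (u : B), Φ t (γ • u) = γ • Φ t u)
    -- strong continuity of the semiflow
    (hscont : ∀ t : ℝ, 0 ≤ t → ∀ u : B, ∀ ε > (0 : ℝ), ∃ δ > (0 : ℝ),
      ∀ v : B, ns (v - u) < δ → ns (Φ t v - Φ t u) < ε)
    -- weak continuity of the semiflow
    (hwcont : ∀ t : ℝ, 0 ≤ t → ∀ u : B, ∀ ε > (0 : ℝ), ∃ δ > (0 : ℝ),
      ∀ v : B, nw (v - u) < δ → nw (Φ t v - Φ t u) < ε)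
    (u₀ v₀ : B)
    (hclos : InWeakOrbitClosure (Γ := Γ) nw u₀ v₀)
    (hss : SsStable ns Φ u₀) :
    SwStable ns nw Φ v₀ :=
  inheritance_of_stability_general ns nw h1a Λ h2a h2b Φ hequiv hwcont u₀ v₀ hclos hss
end

section
/- (Lemma 4.3) Assume (H1)–(H4) and that u₀ ∈ B has cocompact isotropy subgroup Σ (i.e. Γ/Σ is compact). Then u₀ is ss-stable if and only if u₀ is sw-stable. -/
/-!
Strong stability always implies weak stability since `‖·‖_w ≤ ‖·‖_s`. Conversely, by (H4) it
suffices to make `‖γ (Φ t u - Φ t u₀)‖_w` small uniformly in `γ`. Equivariance and invariance of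
`‖·‖_s` let us move `γ` within its coset `γ Σ` (replacing `u` by a translate equally close to
`u₀`), and compactness of `Γ/Σ` together with continuity of `γ ↦ ‖γ‖_w` provides in every coset a
representative of weak operator norm at most some fixed `C`; weak stability with `ε / C` then
gives the uniform bound.
-/

open Filter Topology

theorem QuotientGroup.exists_forall_exists_mem_mul_le {G : Type*} [Group G] [TopologicalSpace G]
    [SeparatelyContinuousMul G] {H : Subgroup G} [CompactSpace (G ⧸ H)] {f : G → ℝ}
    (hf : Continuous f) : ∃ C, ∀ g : G, ∃ h ∈ H, f (g * h) ≤ C := by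
  obtain ⟨C, hC⟩ := isCompact_univ.elim_directed_cover
    (fun C : ℝ => ((↑) : G → G ⧸ H) '' (f ⁻¹' Set.Iio C))
    (fun C => isOpenMap_coe _ (isOpen_Iio.preimage hf))
    (fun q _ => by
      obtain ⟨g, rfl⟩ := mk_surjective q
      exact Set.mem_iUnion.2 ⟨f g + 1, g, by simp, rfl⟩)
    (Monotone.directed_le fun _ _ hCD => Set.image_mono fun _ hg => lt_of_lt_of_le hg hCD)
  refine ⟨C, fun g => ?_⟩
  obtain ⟨g', hg'C, hg'g⟩ := hC (Set.mem_univ (g : G ⧸ H))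
  exact ⟨g⁻¹ * g', QuotientGroup.eq.1 hg'g.symm, by simpa using hg'C.le⟩

section Stabilizer

variable {B Γ : Type*} [AddCommGroup B] [Group Γ] [DistribMulAction Γ B] {u₀ : B}

theorem sub_smul_eq_smul_sub_of_mem_stabilizer {σ : Γ} (hσ : σ ∈ MulAction.stabilizer Γ u₀)
    (u : B) : σ • u - u₀ = σ • (u - u₀) := by
  rw [smul_sub, MulAction.mem_stabilizer_iff.1 hσ]

theorem flow_sub_eq_smul_of_mem_stabilizer {Φ : ℝ → B → B}
    (hequiv : ∀ t (γ : Γ) u, Φ t (γ • u) = γ • Φ t u)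
    {σ : Γ} (hσ : σ ∈ MulAction.stabilizer Γ u₀) (t : ℝ) (u : B) :
    Φ t (σ • u) - Φ t u₀ = σ • (Φ t u - Φ t u₀) := by
  rw [smul_sub, ← hequiv, ← hequiv, MulAction.mem_stabilizer_iff.1 hσ]

end Stabilizer

section Stability

variable {B : Type*} [AddCommGroup B] [Module ℝ B] {ns nw : Seminorm ℝ B}
  {Φ : ℝ → B → B} {u₀ : B}

theorem SsStable.swStable (hle : ∀ u, nw u ≤ ns u) (h : SsStable ns Φ u₀) :
    SwStable ns nw Φ u₀ := fun ε hε =>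
  let ⟨δ, hδ, hu⟩ := h ε hε
  ⟨δ, hδ, fun u hu' t ht => (hle _).trans_lt (hu u hu' t ht)⟩

variable {Γ : Type*} [Group Γ] [DistribMulAction Γ B]

/-- Each `γ` may be replaced by a representative `γ * h` of its coset of weak operator norm at most
`C`, at the cost of replacing `u` by `h⁻¹ • u`, which is as close to `u₀` as `u`. -/
theorem SwStable.forall_smul_lt (hsw : SwStable ns nw Φ u₀)
    (hns : ∀ (γ : Γ) (u : B), ns (γ • u) = ns u) {wop : Γ → ℝ}
    (hwop : ∀ (γ : Γ) (u : B), nw (γ • u) ≤ wop γ * nw u)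
    (hequiv : ∀ t (γ : Γ) u, Φ t (γ • u) = γ • Φ t u) {C : ℝ} (hC : 0 < C)
    (hrep : ∀ γ : Γ, ∃ h ∈ MulAction.stabilizer Γ u₀, wop (γ * h) ≤ C) :
    ∀ ε > (0 : ℝ), ∃ δ > (0 : ℝ), ∀ u : B, ns (u - u₀) < δ →
      ∀ t > (0 : ℝ), ∀ γ : Γ, nw (γ • (Φ t u - Φ t u₀)) < ε := by
  intro ε hε
  obtain ⟨δ, hδ, hsmall⟩ := hsw (ε / C) (div_pos hε hC)
  refine ⟨δ, hδ, fun u hu t ht γ => ?_⟩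
  obtain ⟨h, hh, hγh⟩ := hrep γ
  have hh' := (MulAction.stabilizer Γ u₀).inv_mem hh
  have hu' : ns (h⁻¹ • u - u₀) < δ := by
    rwa [sub_smul_eq_smul_sub_of_mem_stabilizer hh', hns]
  calc nw (γ • (Φ t u - Φ t u₀))
      = nw ((γ * h) • (Φ t (h⁻¹ • u) - Φ t u₀)) := by
        rw [flow_sub_eq_smul_of_mem_stabilizer hequiv hh', smul_smul, mul_inv_cancel_right]
    _ ≤ C * nw (Φ t (h⁻¹ • u) - Φ t u₀) :=
        (hwop _ _).trans (mul_le_mul_of_nonneg_right hγh (apply_nonneg _ _))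
    _ < C * (ε / C) := mul_lt_mul_of_pos_left (hsmall _ hu' t ht) hC
    _ = ε := mul_div_cancel₀ ε hC.ne'

end Stability

theorem ssStable_iff_swStable_of_cocompact_isotropy_general
    {B : Type*} [AddCommGroup B] [Module ℝ B]
    {Γ : Type*} [Group Γ] [TopologicalSpace Γ] [IsTopologicalGroup Γ]
    [DistribMulAction Γ B]
    (ns nw : Seminorm ℝ B)
    -- (H1)(a): the strong norm is Γ-invariant
    (h1a : ∀ (γ : Γ) (u : B), ns (γ • u) = ns u)
    -- (H1)(b),(c): the weak operator norm `γ ↦ ‖γ‖_w` is finite, positive and continuous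
    (wop : Γ → ℝ)
    (h1b : ∀ γ : Γ, 0 < wop γ ∧ ∀ u : B, nw (γ • u) ≤ wop γ * nw u)
    (h1c : Continuous wop)
    -- the family Λ of multiplication operators, (H2)(a),(b)
    (Λ : Set (B →ₗ[ℝ] B))
    (h2a : ∀ L ∈ Λ, ∀ u : B, nw u ≤ ns (L u) ∧ ns (L u) ≤ ns u)
    (h2b : ∀ M > (0 : ℝ), ∀ ε > (0 : ℝ), ∃ L ∈ Λ, ∀ u : B, ns u ≤ M → nw (u - L u) < ε)
    -- (H4): sup_γ ‖γu‖_w small implies ‖u‖_s small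
    (h4 : ∀ ε > (0 : ℝ), ∃ δ > (0 : ℝ), ∀ u : B, (∀ γ : Γ, nw (γ • u) < δ) → ns u < ε)
    (Φ : ℝ → B → B)
    (hequiv : ∀ (t : ℝ) (γ : Γ) (u : B), Φ t (γ • u) = γ • Φ t u)
    (u₀ : B)
    -- `u₀` has cocompact isotropy
    (hcocompact : CompactSpace (Γ ⧸ MulAction.stabilizer Γ u₀)) :
    SsStable ns Φ u₀ ↔ SwStable ns nw Φ u₀ := by
  obtain ⟨L, hL, -⟩ := h2b 1 one_pos 1 one_pos
  refine ⟨SsStable.swStable fun u => (h2a L hL u).1.trans (h2a L hL u).2, fun hsw => ?_⟩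
  obtain ⟨C, hrep⟩ := QuotientGroup.exists_forall_exists_mem_mul_le (H := MulAction.stabilizer Γ u₀) h1c
  have hC : 0 < C := by
    obtain ⟨h, -, hh⟩ := hrep 1
    exact (h1b _).1.trans_le hh
  intro ε hε
  obtain ⟨η, hη, hsmall⟩ := h4 ε hε
  obtain ⟨δ, hδ, horbit⟩ := hsw.forall_smul_lt h1a (fun γ => (h1b γ).2) hequiv hC hrep η hη
  exact ⟨δ, hδ, fun u hu t ht => hsmall _ fun γ => horbit u hu t ht γ⟩

/-- Lemma 4.3: under (H1)–(H4), if `u₀` has cocompact isotropy subgroup `Σ`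
(`Γ/Σ` compact), then `u₀` is ss-stable if and only if it is sw-stable. -/
theorem ssStable_iff_swStable_of_cocompact_isotropy
    {B : Type*} [AddCommGroup B] [Module ℝ B]
    {Γ : Type*} [Group Γ] [TopologicalSpace Γ] [IsTopologicalGroup Γ]
    [DistribMulAction Γ B]
    (ns nw : Seminorm ℝ B)
    -- (H1)(a): the strong norm is Γ-invariant
    (h1a : ∀ (γ : Γ) (u : B), ns (γ • u) = ns u)
    -- (H1)(b),(c): the weak operator norm `γ ↦ ‖γ‖_w` is finite, positive and continuous
    (wop : Γ → ℝ)
    (h1b : ∀ γ : Γ, 0 < wop γ ∧ ∀ u : B, nw (γ • u) ≤ wop γ * nw u)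
    (h1c : Continuous wop)
    -- the family Λ of multiplication operators, (H2)(a),(b)
    (Λ : Set (B →ₗ[ℝ] B))
    (h2a : ∀ L ∈ Λ, ∀ u : B, nw u ≤ ns (L u) ∧ ns (L u) ≤ ns u)
    (h2b : ∀ M > (0 : ℝ), ∀ ε > (0 : ℝ), ∃ L ∈ Λ, ∀ u : B, ns u ≤ M → nw (u - L u) < ε)
    -- (H3)
    (h3 : ∀ u v : B,
      (∃ γseq : ℕ → Γ, Tendsto (fun k => nw (γseq k • u - v)) atTop (𝓝 0)) →
      ∀ L ∈ Λ, ∀ ε > (0 : ℝ), ∃ γ : Γ, ns (L (γ • u - v)) < ε)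
    -- (H4): sup_γ ‖γu‖_w small implies ‖u‖_s small
    (h4 : ∀ ε > (0 : ℝ), ∃ δ > (0 : ℝ), ∀ u : B, (∀ γ : Γ, nw (γ • u) < δ) → ns u < ε)
    (Φ : ℝ → B → B)
    (hequiv : ∀ (t : ℝ) (γ : Γ) (u : B), Φ t (γ • u) = γ • Φ t u)
    (u₀ : B)
    -- `u₀` has cocompact isotropy
    (hcocompact : CompactSpace (Γ ⧸ MulAction.stabilizer Γ u₀)) :
    SsStable ns Φ u₀ ↔ SwStable ns nw Φ u₀ :=
  ssStable_iff_swStable_of_cocompact_isotropy_general ns nw h1a wop h1b h1c Λ h2a h2b h4 Φ hequiv u₀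
    hcocompact
end

section
/- (Theorem 4.4) Assume (H1)–(H4). Suppose u₀, v₀ ∈ B with v₀ ∈ clos_w(Γu₀), v₀ has cocompact isotropy subgroup, Φ_t is Γ-equivariant and continuous in both norms, and u₀ is ss-stable. Then v₀ is ss-stable. -/
open Filter Topology

/-! The orbit points `γ • u₀` approximate `v₀` weakly, and `γ⁻¹` carries a strong perturbation
`u` of `v₀` to the strong perturbation `γ⁻¹ • (u - v₀) + u₀` of `u₀`; ss-stability of `u₀` and
weak continuity of `Φ t` therefore make `v₀` sw-stable. To get ss-stability from (H4), one needs
`nw (σ • (Φ t u - Φ t v₀))` small for every `σ`. By cocompactness, `σ = τ * s⁻¹` where `s` fixes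
`v₀` and the weak operator norm of `τ` is bounded uniformly, so sw-stability at `s⁻¹ • u` suffices. -/

theorem QuotientGroup.exists_forall_exists_mul_mem_lt {Γ : Type*} [Group Γ]
    [TopologicalSpace Γ] [SeparatelyContinuousMul Γ] (H : Subgroup Γ) [CompactSpace (Γ ⧸ H)]
    {f : Γ → ℝ} (hf : Continuous f) :
    ∃ C > (0 : ℝ), ∀ σ : Γ, ∃ s ∈ H, f (σ * s) < C := by
  let U : ℝ → Set (Γ ⧸ H) := fun c => (↑) '' (f ⁻¹' Set.Iio c)
  have hU_open (c : ℝ) : IsOpen (U c) :=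
    QuotientGroup.isOpenMap_coe _ (isOpen_Iio.preimage hf)
  have hU_cover : Set.univ ⊆ ⋃ c, U c := by
    rintro x -
    induction x using QuotientGroup.induction_on with
    | H σ => exact Set.mem_iUnion.mpr ⟨f σ + 1, σ, show f σ < f σ + 1 from lt_add_one _, rfl⟩
  have hU_mono : Monotone U := fun _ _ hcd =>
    Set.image_mono (Set.preimage_mono (Set.Iio_subset_Iio hcd))
  obtain ⟨c, hc⟩ := isCompact_univ.elim_directed_cover U hU_open hU_cover hU_mono.directed_le
  refine ⟨max c 1, lt_max_of_lt_right one_pos, fun σ => ?_⟩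
  obtain ⟨τ, hτ, hτσ⟩ := hc (Set.mem_univ (σ : Γ ⧸ H))
  refine ⟨σ⁻¹ * τ, QuotientGroup.eq.mp hτσ.symm, ?_⟩
  rw [mul_inv_cancel_left]
  exact lt_max_of_lt_left hτ

section Stability

variable {B : Type*} [AddCommGroup B] [Module ℝ B] {Γ : Type*} [Group Γ]
  [DistribMulAction Γ B] {ns nw : Seminorm ℝ B} {Φ : ℝ → B → B}

theorem SsStable.swStable_of_inWeakOrbitClosure {u₀ v₀ : B}
    (hss : SsStable ns Φ u₀) (hiso : ∀ (γ : Γ) (u : B), ns (γ • u) = ns u)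
    (hequiv : ∀ (t : ℝ) (γ : Γ) (u : B), Φ t (γ • u) = γ • Φ t u)
    (hle : ∀ u : B, nw u ≤ ns u)
    (hwcont : ∀ t > (0 : ℝ), ∀ u : B, ∀ ε > (0 : ℝ), ∃ δ > (0 : ℝ),
      ∀ v : B, nw (v - u) < δ → nw (Φ t v - Φ t u) < ε)
    (hclos : InWeakOrbitClosure (Γ := Γ) nw u₀ v₀) :
    SwStable ns nw Φ v₀ := by
  obtain ⟨γseq, hγseq⟩ := hclos
  intro ε hε
  obtain ⟨δ, hδ, hstab⟩ := hss (ε / 3) (by positivity)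
  refine ⟨δ, hδ, fun u hu t ht => ?_⟩
  obtain ⟨δu, hδu, hcont_u⟩ := hwcont t ht u (ε / 3) (by positivity)
  obtain ⟨δv, hδv, hcont_v⟩ := hwcont t ht v₀ (ε / 3) (by positivity)
  obtain ⟨k, hk⟩ := (hγseq.eventually_lt_const (lt_min hδu hδv)).exists
  set γ := γseq k
  set u' := γ⁻¹ • (u - v₀) + u₀
  have hγu' : γ • u' - u = γ • u₀ - v₀ := by
    simp only [u', smul_add, smul_inv_smul]
    abel
  have hfirst : nw (Φ t u - Φ t (γ • u')) < ε / 3 := by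
    rw [map_sub_rev]
    exact hcont_u _ (hγu' ▸ hk.trans_le (min_le_left _ _))
  have hmiddle : nw (γ • (Φ t u' - Φ t u₀)) < ε / 3 := by
    refine (hle _).trans_lt ?_
    rw [hiso]
    exact hstab u' (by simpa only [u', add_sub_cancel_right, hiso] using hu) t ht
  have hlast : nw (Φ t (γ • u₀) - Φ t v₀) < ε / 3 :=
    hcont_v _ (hk.trans_le (min_le_right _ _))
  have hsplit : Φ t u - Φ t v₀ = (Φ t u - Φ t (γ • u')) + γ • (Φ t u' - Φ t u₀)
      + (Φ t (γ • u₀) - Φ t v₀) := by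
    rw [smul_sub, ← hequiv, ← hequiv]
    abel
  calc nw (Φ t u - Φ t v₀)
      ≤ nw (Φ t u - Φ t (γ • u')) + nw (γ • (Φ t u' - Φ t u₀))
        + nw (Φ t (γ • u₀) - Φ t v₀) := by
        rw [hsplit]
        exact (map_add_le_add nw _ _).trans (add_le_add_left (map_add_le_add nw _ _) _)
    _ < ε := by linarith

theorem SwStable.ssStable_of_compactSpace_quotient_stabilizer [TopologicalSpace Γ]
    [SeparatelyContinuousMul Γ] {v₀ : B} (hsw : SwStable ns nw Φ v₀)
    (hiso : ∀ (γ : Γ) (u : B), ns (γ • u) = ns u)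
    (hequiv : ∀ (t : ℝ) (γ : Γ) (u : B), Φ t (γ • u) = γ • Φ t u)
    {wop : Γ → ℝ} (hwop : ∀ (γ : Γ) (u : B), nw (γ • u) ≤ wop γ * nw u)
    (hwop_cont : Continuous wop)
    (hH4 : ∀ ε > (0 : ℝ), ∃ δ > (0 : ℝ), ∀ u : B, (∀ γ : Γ, nw (γ • u) < δ) → ns u < ε)
    [CompactSpace (Γ ⧸ MulAction.stabilizer Γ v₀)] :
    SsStable ns Φ v₀ := by
  intro ε hε
  obtain ⟨η, hη, hH4ε⟩ := hH4 ε hε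
  obtain ⟨C, hC, hcoset⟩ :=
    QuotientGroup.exists_forall_exists_mul_mem_lt (MulAction.stabilizer Γ v₀) hwop_cont
  obtain ⟨δ, hδ, hswδ⟩ := hsw (η / C) (by positivity)
  refine ⟨δ, hδ, fun u hu t ht => hH4ε _ fun σ => ?_⟩
  obtain ⟨s, hs, hσs⟩ := hcoset σ
  have hsv : s⁻¹ • v₀ = v₀ := Subgroup.inv_mem _ hs
  have hnear : ns (s⁻¹ • u - v₀) < δ := by
    rwa [← hsv, ← smul_sub, hiso]
  have hrewrite : σ • (Φ t u - Φ t v₀) = (σ * s) • (Φ t (s⁻¹ • u) - Φ t v₀) :=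
    calc σ • (Φ t u - Φ t v₀) = (σ * s) • s⁻¹ • (Φ t u - Φ t v₀) := by
          rw [smul_smul, mul_inv_cancel_right]
      _ = (σ * s) • (Φ t (s⁻¹ • u) - Φ t (s⁻¹ • v₀)) := by rw [hequiv, hequiv, smul_sub]
      _ = (σ * s) • (Φ t (s⁻¹ • u) - Φ t v₀) := by rw [hsv]
  have hsmall := hswδ _ hnear t ht
  calc nw (σ • (Φ t u - Φ t v₀))
      ≤ wop (σ * s) * nw (Φ t (s⁻¹ • u) - Φ t v₀) := hrewrite ▸ hwop _ _
    _ ≤ C * nw (Φ t (s⁻¹ • u) - Φ t v₀) := by gcongr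
    _ < C * (η / C) := by gcongr
    _ = η := mul_div_cancel₀ η hC.ne'

end Stability

theorem inheritance_of_ss_stability_general
    {B : Type*} [AddCommGroup B] [Module ℝ B]
    {Γ : Type*} [Group Γ] [TopologicalSpace Γ] [IsTopologicalGroup Γ]
    [DistribMulAction Γ B]
    (ns nw : Seminorm ℝ B)
    -- (H1)(a)
    (h1a : ∀ (γ : Γ) (u : B), ns (γ • u) = ns u)
    -- (H1)(b),(c)
    (wop : Γ → ℝ)
    (h1b : ∀ γ : Γ, 0 < wop γ ∧ ∀ u : B, nw (γ • u) ≤ wop γ * nw u)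
    (h1c : Continuous wop)
    -- (H2)
    (Λ : Set (B →ₗ[ℝ] B))
    (h2a : ∀ L ∈ Λ, ∀ u : B, nw u ≤ ns (L u) ∧ ns (L u) ≤ ns u)
    (h2b : ∀ M > (0 : ℝ), ∀ ε > (0 : ℝ), ∃ L ∈ Λ, ∀ u : B, ns u ≤ M → nw (u - L u) < ε)
    -- (H4)
    (h4 : ∀ ε > (0 : ℝ), ∃ δ > (0 : ℝ), ∀ u : B, (∀ γ : Γ, nw (γ • u) < δ) → ns u < ε)
    (Φ : ℝ → B → B)
    (hequiv : ∀ (t : ℝ) (γ : Γ) (u : B), Φ t (γ • u) = γ • Φ t u)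
    (hwcont : ∀ t : ℝ, 0 ≤ t → ∀ u : B, ∀ ε > (0 : ℝ), ∃ δ > (0 : ℝ),
      ∀ v : B, nw (v - u) < δ → nw (Φ t v - Φ t u) < ε)
    (u₀ v₀ : B)
    (hclos : InWeakOrbitClosure (Γ := Γ) nw u₀ v₀)
    -- `v₀` has cocompact isotropy
    (hcocompact : CompactSpace (Γ ⧸ MulAction.stabilizer Γ v₀))
    (hss : SsStable ns Φ u₀) :
    SsStable ns Φ v₀ := by
  obtain ⟨L, hL, -⟩ := h2b 1 one_pos 1 one_pos
  have hle : ∀ u : B, nw u ≤ ns u := fun u => (h2a L hL u).1.trans (h2a L hL u).2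
  have hsw : SwStable ns nw Φ v₀ :=
    hss.swStable_of_inWeakOrbitClosure h1a hequiv hle (fun t ht => hwcont t ht.le) hclos
  exact hsw.ssStable_of_compactSpace_quotient_stabilizer h1a hequiv (fun γ => (h1b γ).2) h1c h4

/-- Theorem 4.4: under (H1)–(H4), if `v₀ ∈ clos_w(Γu₀)` has cocompact isotropy and `u₀`
is ss-stable, then `v₀` is ss-stable. -/
theorem inheritance_of_ss_stability
    {B : Type*} [AddCommGroup B] [Module ℝ B]
    {Γ : Type*} [Group Γ] [TopologicalSpace Γ] [IsTopologicalGroup Γ]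
    [DistribMulAction Γ B]
    (ns nw : Seminorm ℝ B)
    -- (H1)(a)
    (h1a : ∀ (γ : Γ) (u : B), ns (γ • u) = ns u)
    -- (H1)(b),(c)
    (wop : Γ → ℝ)
    (h1b : ∀ γ : Γ, 0 < wop γ ∧ ∀ u : B, nw (γ • u) ≤ wop γ * nw u)
    (h1c : Continuous wop)
    -- (H2)
    (Λ : Set (B →ₗ[ℝ] B))
    (h2a : ∀ L ∈ Λ, ∀ u : B, nw u ≤ ns (L u) ∧ ns (L u) ≤ ns u)
    (h2b : ∀ M > (0 : ℝ), ∀ ε > (0 : ℝ), ∃ L ∈ Λ, ∀ u : B, ns u ≤ M → nw (u - L u) < ε)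
    -- (H3)
    (h3 : ∀ u v : B, InWeakOrbitClosure (Γ := Γ) nw u v →
      ∀ L ∈ Λ, ∀ ε > (0 : ℝ), ∃ γ : Γ, ns (L (γ • u - v)) < ε)
    -- (H4)
    (h4 : ∀ ε > (0 : ℝ), ∃ δ > (0 : ℝ), ∀ u : B, (∀ γ : Γ, nw (γ • u) < δ) → ns u < ε)
    (Φ : ℝ → B → B)
    (hequiv : ∀ (t : ℝ) (γ : Γ) (u : B), Φ t (γ • u) = γ • Φ t u)
    -- strong and weak continuity of the semiflow
    (hscont : ∀ t : ℝ, 0 ≤ t → ∀ u : B, ∀ ε > (0 : ℝ), ∃ δ > (0 : ℝ),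
      ∀ v : B, ns (v - u) < δ → ns (Φ t v - Φ t u) < ε)
    (hwcont : ∀ t : ℝ, 0 ≤ t → ∀ u : B, ∀ ε > (0 : ℝ), ∃ δ > (0 : ℝ),
      ∀ v : B, nw (v - u) < δ → nw (Φ t v - Φ t u) < ε)
    (u₀ v₀ : B)
    (hclos : InWeakOrbitClosure (Γ := Γ) nw u₀ v₀)
    -- `v₀` has cocompact isotropy
    (hcocompact : CompactSpace (Γ ⧸ MulAction.stabilizer Γ v₀))
    (hss : SsStable ns Φ u₀) :
    SsStable ns Φ v₀ :=
  inheritance_of_ss_stability_general ns nw h1a wop h1b h1c Λ h2a h2b h4 Φ hequiv hwcont u₀ v₀ hclos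
    hcocompact hss
end
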